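/- If the PCP instance L has no solution, then Duplicator has a winning strategy in the two-buffer simulation game with two unbounded buffers on 𝒜_L and ℬ_L; i.e., 𝒜_L ⊑(ω,ω) ℬ_L. -/

import Mathlib

open scoped Classical

/-- A Büchi automaton over alphabet `S`. -/
structure BA (S : Type) where
  Q : Type
  init : Q
  trans : Q → S → Q → Prop
  acc : Q → Prop

/-- The Büchi language of `A`: infinite words with a run from the initial state
visiting accepting states infinitely often. -/
def BA.Lang {S : Type} (A : BA S) : Set (ℕ → S) :=
  { w | ∃ ρ : ℕ → A.Q, ρ 0 = A.init ∧ (∀ n, A.trans (ρ n) (w n) (ρ (n+1))) ∧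
        ∀ n, ∃ m, n ≤ m ∧ A.acc (ρ m) }

/-- A configuration of the two-buffer simulation game: Spoiler's state, contents of
the two FIFO buffers (head = oldest letter), Duplicator's state. -/
structure Cfg {S : Type} (A B : BA S) where
  qa : A.Q
  b1 : List S
  b2 : List S
  qb : B.Q

/-- The configuration after Spoiler's move `m = (a, q')`: his state becomes `q'` and
the letter `a` is appended to buffer `σ a` (`true` = buffer 1, `false` = buffer 2). -/
def midCfg {S : Type} {A B : BA S} (σ : S → Bool) (c : Cfg A B) (m : S × A.Q) : Cfg A B :=
  ⟨m.2, if σ m.1 then c.b1 ++ [m.1] else c.b1, if σ m.1 then c.b2 else c.b2 ++ [m.1], c.qb⟩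

/-- Applying a finite sequence of Duplicator consumption steps: each step picks a buffer
(`true` = buffer 1) and a successor state, consuming the oldest letter of that buffer
along a matching transition of `B`.  Returns `none` if some step is illegal. -/
noncomputable def dupApply {S : Type} (A B : BA S) :
    Cfg A B → List (Bool × B.Q) → Option (Cfg A B)
  | c, [] => some c
  | c, (j, p') :: ms =>
    if j then
      match c.b1 with
      | [] => none
      | b :: β => if B.trans c.qb b p' then dupApply A B ⟨c.qa, β, c.b2, p'⟩ ms else none
    else
      match c.b2 with
      | [] => none
      | b :: β => if B.trans c.qb b p' then dupApply A B ⟨c.qa, c.b1, β, p'⟩ ms else none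

/-- The configuration at the start of round `n` (i.e. after Duplicator's moves of
round `n-1`), given Spoiler's moves `sp` and Duplicator's responses `dm`;
`none` once an illegal move has occurred. -/
noncomputable def playCfg {S : Type} (A B : BA S) (σ : S → Bool)
    (sp : ℕ → S × A.Q) (dm : ℕ → List (Bool × B.Q)) : ℕ → Option (Cfg A B)
  | 0 => some ⟨A.init, [], [], B.init⟩
  | n+1 =>
    match playCfg A B σ sp dm n with
    | none => none
    | some c =>
      if A.trans c.qa (sp n).1 (sp n).2 then dupApply A B (midCfg σ c (sp n)) (dm n) else none

/-- Number of letters put into buffer `j` by Spoiler during the first `n` rounds. -/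
noncomputable def pushed {S : Type} {QA : Type} (σ : S → Bool) (sp : ℕ → S × QA)
    (j : Bool) (n : ℕ) : ℕ :=
  ((Finset.range n).filter fun i => σ (sp i).1 = j).card

/-- Number of letters consumed from buffer `j` by Duplicator during the first `n` rounds. -/
noncomputable def consumed {QB : Type} (dm : ℕ → List (Bool × QB)) (j : Bool) (n : ℕ) : ℕ :=
  ∑ i ∈ Finset.range n, ((dm i).filter fun x => x.1 = j).length

/-- Duplicator's strategy is consistent with the moves `dm` of a play. -/
def Consistent {S : Type} (A B : BA S)
    (dstrat : List ((S × A.Q) × List (Bool × B.Q)) → (S × A.Q) → List (Bool × B.Q))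
    (sp : ℕ → S × A.Q) (dm : ℕ → List (Bool × B.Q)) : Prop :=
  ∀ n, dm n = dstrat (List.ofFn fun i : Fin n => (sp i, dm i)) (sp n)

/-- Spoiler's moves are legal as long as the play is defined. -/
def SpLegal {S : Type} (A B : BA S) (σ : S → Bool)
    (sp : ℕ → S × A.Q) (dm : ℕ → List (Bool × B.Q)) : Prop :=
  ∀ n c, playCfg A B σ sp dm n = some c → A.trans c.qa (sp n).1 (sp n).2

/-- Duplicator's winning condition for a play of the two-buffer game with
capacities `(k1, k2)`: the buffers never exceed their capacities (checked after her
moves), and either Spoiler's run visits accepting states only finitely often, or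
every letter put into a buffer is eventually consumed and Duplicator's run visits
accepting states infinitely often. -/
def Win2 {S : Type} (A B : BA S) (σ : S → Bool) (k1 k2 : ℕ∞)
    (sp : ℕ → S × A.Q) (dm : ℕ → List (Bool × B.Q)) : Prop :=
  (∀ n c, playCfg A B σ sp dm n = some c →
      (c.b1.length : ℕ∞) ≤ k1 ∧ (c.b2.length : ℕ∞) ≤ k2) ∧
  ((∃ N, ∀ n, N ≤ n → ¬ A.acc (sp n).2) ∨
    ((∀ n j, ∃ m, pushed σ sp j n ≤ consumed dm j m) ∧
     (∀ n, ∃ m, n ≤ m ∧ ∃ x ∈ dm m, B.acc x.2)))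

/-- `dstrat` is a winning strategy for Duplicator in the two-buffer simulation game on
`A`, `B` with letter distribution `σ` and capacities `(k1, k2)`: against every legal
behaviour of Spoiler, all of Duplicator's prescribed moves are legal (the play never
breaks) and the resulting play is won by Duplicator. -/
def WinningStrat2 {S : Type} (A B : BA S) (σ : S → Bool) (k1 k2 : ℕ∞)
    (dstrat : List ((S × A.Q) × List (Bool × B.Q)) → (S × A.Q) → List (Bool × B.Q)) : Prop :=
  ∀ sp dm, Consistent A B dstrat sp dm → SpLegal A B σ sp dm →
    (∀ n, (playCfg A B σ sp dm n).isSome) ∧ Win2 A B σ k1 k2 sp dm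

/-- Two-buffer simulation `A ⊑(k1,k2) B`: Duplicator has a winning strategy. -/
def Sim2 {S : Type} (A B : BA S) (σ : S → Bool) (k1 k2 : ℕ∞) : Prop :=
  ∃ dstrat, WinningStrat2 A B σ k1 k2 dstrat
/-- The alphabet `{0, 1, #, 0̄, 1̄, #̄}` used in the PCP reduction. -/
inductive PL | z | o | hash | zb | ob | hashb
deriving DecidableEq

/-- Unbarred copy of a bit. -/
def pl : Bool → PL | false => .z | true => .o

/-- Barred copy of a bit. -/
def br : Bool → PL | false => .zb | true => .ob

/-- The word `u · v̄` over `PL` associated with a PCP pair `(u, v)`. -/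
def wrd (u v : List Bool) : List PL := u.map pl ++ v.map br

/-- The distribution function of the PCP reduction: unbarred letters go to
buffer 1 (`true`), barred letters to buffer 2 (`false`). -/
def σPL : PL → Bool
  | .z => true | .o => true | .hash => true
  | .zb => false | .ob => false | .hashb => false

/-- The automaton `𝒜_L` of the PCP reduction for the instance
`L = {(u i, v i) | i < nn}`.  States: `Sum.inl 0 = s` (initial), `Sum.inl 1 = t`
(the common hub), `Sum.inl 2 = h` (between `#` and `#̄`), `Sum.inl 3 = r`
(accepting), and `Sum.inr (i, k)` for the internal states of the path reading
`u_i · v̄_i` (position `k` reached after `k` letters). -/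
def AL (nn : ℕ) (u v : Fin nn → List Bool) : BA PL where
  Q := Fin 4 ⊕ (Fin nn × ℕ)
  init := Sum.inl 0
  acc := fun q => q = Sum.inl 3
  trans := fun q x q' =>
    (∃ i : Fin nn, (q = Sum.inl 0 ∨ q = Sum.inl 1) ∧
        (wrd (u i) (v i))[0]? = some x ∧ q' = Sum.inr (i, 1)) ∨
    (∃ i k, q = Sum.inr (i, k) ∧ (wrd (u i) (v i))[k]? = some x ∧
        k + 1 < (wrd (u i) (v i)).length ∧ q' = Sum.inr (i, k + 1)) ∨
    (∃ i k, q = Sum.inr (i, k) ∧ (wrd (u i) (v i))[k]? = some x ∧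
        k + 1 = (wrd (u i) (v i)).length ∧ q' = Sum.inl 1) ∨
    (q = Sum.inl 1 ∧ x = .hash ∧ q' = Sum.inl 2) ∨
    (q = Sum.inl 2 ∧ x = .hashb ∧ q' = Sum.inl 3) ∨
    (q = Sum.inl 3 ∧ x = .hash ∧ q' = Sum.inl 2)

/-- The automaton `ℬ_L` of the PCP reduction.  States (as elements of `Fin 7`):
`0 = p0` (initial), `1 = p1`, `2 = p2`, `3 = p3`, `4 = p4`, `5 = p5` (accepting
sink), `6 = q`. -/
def BL : BA PL where
  Q := Fin 7
  init := 0
  acc := fun q => q = 5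
  trans := fun q x q' =>
    (q = 0 ∧ x = .z ∧ q' = 2) ∨ (q = 2 ∧ x = .zb ∧ q' = 0) ∨
    (q = 0 ∧ x = .o ∧ q' = 4) ∨ (q = 4 ∧ x = .ob ∧ q' = 0) ∨
    (q = 0 ∧ x = .z ∧ q' = 1) ∨ (q = 1 ∧ (x = .ob ∨ x = .hashb) ∧ q' = 5) ∨
    (q = 0 ∧ x = .o ∧ q' = 6) ∨ (q = 6 ∧ (x = .zb ∨ x = .hashb) ∧ q' = 5) ∨
    (q = 0 ∧ x = .hash ∧ q' = 3) ∨ (q = 3 ∧ (x = .zb ∨ x = .ob) ∧ q' = 5) ∨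
    (q = 5 ∧ q' = 5)


/-!
With unbounded buffers Duplicator can afford to wait: she skips her turns until Spoiler's run
first enters the accepting state `r` of `𝒜_L`. If that never happens, Spoiler's run is
rejecting. If it does, Spoiler has read `u_{i₁} v̄_{i₁} ⋯ u_{iₘ} v̄_{iₘ} # #̄`, so the buffers hold
`U #` and `V̄ #̄` with `U ≠ V` because `L` has no solution. `ℬ_L` then consumes balanced pairs up
to the first mismatch, which takes it to its accepting sink; there it empties both buffers and
afterwards consumes every letter in the round it is produced.
-/

section Game
variable {S : Type} {A B : BA S}

lemma dupApply_append (c : Cfg A B) (ms₁ ms₂ : List (Bool × B.Q)) :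
    dupApply A B c (ms₁ ++ ms₂) = (dupApply A B c ms₁).bind (dupApply A B · ms₂) := by
  induction ms₁ generalizing c with
  | nil => rfl
  | cons m ms ih =>
    obtain ⟨_ | _, p'⟩ := m
    · cases h : c.b2 with
      | nil => simp [dupApply, h]
      | cons b β => by_cases ht : B.trans c.qb b p' <;> simp [dupApply, h, ht, ih]
    · cases h : c.b1 with
      | nil => simp [dupApply, h]
      | cons b β => by_cases ht : B.trans c.qb b p' <;> simp [dupApply, h, ht, ih]

lemma length_of_dupApply_eq_some {c c' : Cfg A B} {ms : List (Bool × B.Q)}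
    (h : dupApply A B c ms = some c') :
    c.b1.length = c'.b1.length + (ms.filter (·.1 = true)).length ∧
      c.b2.length = c'.b2.length + (ms.filter (·.1 = false)).length := by
  induction ms generalizing c with
  | nil => cases h; simp
  | cons m ms ih =>
    obtain ⟨_ | _, p'⟩ := m
    · cases hb : c.b2 with
      | nil => simp [dupApply, hb] at h
      | cons b β =>
        by_cases ht : B.trans c.qb b p'
        · simp only [dupApply, hb, ht, Bool.false_eq_true, if_false, if_true] at h
          have := ih h
          simp_all
          omega
        · simp [dupApply, hb, ht] at h
    · cases hb : c.b1 with
      | nil => simp [dupApply, hb] at h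
      | cons b β =>
        by_cases ht : B.trans c.qb b p'
        · simp only [dupApply, hb, ht, if_true] at h
          have := ih h
          simp_all
          omega
        · simp [dupApply, hb, ht] at h

def DupReach (c c' : Cfg A B) : Prop := ∃ ms, dupApply A B c ms = some c'

namespace DupReach

lemma refl (c : Cfg A B) : DupReach c c := ⟨[], rfl⟩

lemma trans {c c' c'' : Cfg A B} : DupReach c c' → DupReach c' c'' → DupReach c c''
  | ⟨ms₁, h₁⟩, ⟨ms₂, h₂⟩ => ⟨ms₁ ++ ms₂, by rw [dupApply_append, h₁]; exact h₂⟩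

lemma pop_left {qa : A.Q} {q q' : B.Q} {a : S} {l₁ l₂ : List S} (h : B.trans q a q') :
    DupReach ⟨qa, a :: l₁, l₂, q⟩ ⟨qa, l₁, l₂, q'⟩ :=
  ⟨[(true, q')], by simp [dupApply, h]⟩

lemma pop_right {qa : A.Q} {q q' : B.Q} {b : S} {l₁ l₂ : List S} (h : B.trans q b q') :
    DupReach ⟨qa, l₁, b :: l₂, q⟩ ⟨qa, l₁, l₂, q'⟩ :=
  ⟨[(false, q')], by simp [dupApply, h]⟩

lemma flush {p : B.Q} (hsink : ∀ a, B.trans p a p) (qa : A.Q) (l₁ l₂ : List S) :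
    DupReach ⟨qa, l₁, l₂, p⟩ ⟨qa, [], [], p⟩ := by
  induction l₁ with
  | cons a l₁ ih => exact (pop_left (hsink a)).trans ih
  | nil =>
    induction l₂ with
    | nil => exact refl _
    | cons b l₂ ih => exact (pop_right (hsink b)).trans ih

end DupReach

def spWord {Q : Type} (sp : ℕ → S × Q) (n : ℕ) : List S := List.ofFn fun i : Fin n => (sp i).1

lemma spWord_succ {Q : Type} (sp : ℕ → S × Q) (n : ℕ) :
    spWord sp (n + 1) = spWord sp n ++ [(sp n).1] := by
  rw [spWord, spWord, List.ofFn_succ', List.concat_eq_append]; rfl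

def spoilerState (A : BA S) (sp : ℕ → S × A.Q) : ℕ → A.Q
  | 0 => A.init
  | n + 1 => (sp n).2

variable {σ : S → Bool} {sp : ℕ → S × A.Q} {dm : ℕ → List (Bool × B.Q)}

lemma playCfg_succ {n : ℕ} {c : Cfg A B} (hc : playCfg A B σ sp dm n = some c)
    (ht : A.trans c.qa (sp n).1 (sp n).2) :
    playCfg A B σ sp dm (n + 1) = dupApply A B (midCfg σ c (sp n)) (dm n) := by
  rw [playCfg, hc]; simp [ht]

lemma playCfg_succ_eq_some {n : ℕ} {c' : Cfg A B} :
    playCfg A B σ sp dm (n + 1) = some c' ↔ ∃ c, playCfg A B σ sp dm n = some c ∧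
      A.trans c.qa (sp n).1 (sp n).2 ∧ dupApply A B (midCfg σ c (sp n)) (dm n) = some c' := by
  rw [playCfg]
  cases playCfg A B σ sp dm n with
  | none => simp
  | some c => by_cases ht : A.trans c.qa (sp n).1 (sp n).2 <;> simp [ht]

lemma midCfg_filter (q : A.Q) (qb : B.Q) (w : List S) (m : S × A.Q) :
    midCfg σ (⟨q, w.filter σ, w.filter (!σ ·), qb⟩ : Cfg A B) m =
      ⟨m.2, (w ++ [m.1]).filter σ, (w ++ [m.1]).filter (!σ ·), qb⟩ := by
  cases h : σ m.1 <;> simp [midCfg, h]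

lemma playCfg_of_forall_dm_eq_nil (hleg : SpLegal A B σ sp dm) :
    ∀ n, (∀ i < n, dm i = []) → playCfg A B σ sp dm n =
      some ⟨spoilerState A sp n, (spWord sp n).filter σ, (spWord sp n).filter (!σ ·), B.init⟩
  | 0, _ => rfl
  | n + 1, hnil => by
    have hc := playCfg_of_forall_dm_eq_nil hleg n fun i hi => hnil i (by omega)
    rw [playCfg_succ hc (hleg n _ hc), hnil n n.lt_succ_self, midCfg_filter, spWord_succ]
    rfl

lemma playCfg_of_sink {p : B.Q} (hsink : ∀ a, B.trans p a p) (hleg : SpLegal A B σ sp dm)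
    {T : ℕ} (hT : ∃ q, playCfg A B σ sp dm T = some ⟨q, [], [], p⟩)
    (hdm : ∀ n ≥ T, dm n = [(σ (sp n).1, p)]) :
    ∀ n ≥ T, ∃ q, playCfg A B σ sp dm n = some ⟨q, [], [], p⟩ := by
  intro n hn
  induction n, hn using Nat.le_induction with
  | base => exact hT
  | succ n hn ih =>
    obtain ⟨q, hq⟩ := ih
    refine ⟨(sp n).2, ?_⟩
    rw [playCfg_succ hq (hleg n _ hq), hdm n hn]
    cases h : σ (sp n).1 <;> simp [midCfg, dupApply, h, hsink]

lemma pushed_succ (j : Bool) (n : ℕ) :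
    pushed σ sp j (n + 1) = pushed σ sp j n + if σ (sp n).1 = j then 1 else 0 := by
  rw [pushed, pushed, Finset.range_add_one, Finset.filter_insert]
  split_ifs <;> simp [Finset.card_insert_of_notMem]

lemma pushed_mono (j : Bool) : Monotone (pushed σ sp j) := fun _ _ h =>
  Finset.card_le_card (Finset.filter_subset_filter _ (Finset.range_subset_range.2 h))

lemma consumed_succ (j : Bool) (n : ℕ) :
    consumed dm j (n + 1) = consumed dm j n + ((dm n).filter (·.1 = j)).length :=
  Finset.sum_range_succ _ _

lemma pushed_eq_consumed_add_length :
    ∀ n (c : Cfg A B), playCfg A B σ sp dm n = some c →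
      pushed σ sp true n = consumed dm true n + c.b1.length ∧
        pushed σ sp false n = consumed dm false n + c.b2.length
  | 0, c, h => by cases h; simp [pushed, consumed]
  | n + 1, c', h => by
    obtain ⟨c, hc, -, hd⟩ := playCfg_succ_eq_some.1 h
    obtain ⟨ih₁, ih₂⟩ := pushed_eq_consumed_add_length n c hc
    obtain ⟨h₁, h₂⟩ := length_of_dupApply_eq_some hd
    simp only [pushed_succ, consumed_succ, ih₁, ih₂]
    cases hσ : σ (sp n).1 <;> simp_all [midCfg] <;> omega

lemma pushed_le_consumed_of_frequently_empty {p : B.Q}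
    (h : ∀ n, ∃ m ≥ n, ∃ q, playCfg A B σ sp dm m = some ⟨q, [], [], p⟩) (n : ℕ) (j : Bool) :
    ∃ m, pushed σ sp j n ≤ consumed dm j m := by
  obtain ⟨m, hnm, q, hm⟩ := h n
  obtain ⟨h₁, h₂⟩ := pushed_eq_consumed_add_length m _ hm
  refine ⟨m, (pushed_mono j hnm).trans ?_⟩
  cases j
  · simp [h₂]
  · simp [h₁]

end Game

section Strategy
variable {S : Type} {A B : BA S} (σ : S → Bool) (r : A.Q) (p : B.Q)

noncomputable def drainMoves (w : List S) : List (Bool × B.Q) :=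
  if h : DupReach (⟨r, w.filter σ, w.filter (!σ ·), B.init⟩ : Cfg A B) ⟨r, [], [], p⟩
  then h.choose else []

noncomputable def waitDrainStrat (hist : List ((S × A.Q) × List (Bool × B.Q)))
    (m : S × A.Q) : List (Bool × B.Q) :=
  if ∃ e ∈ hist, e.1.2 = r then [(σ m.1, p)]
  else if m.2 = r then drainMoves σ r p (hist.map (·.1.1) ++ [m.1])
  else []

variable {σ r p}

lemma dupApply_drainMoves {w : List S}
    (h : DupReach (⟨r, w.filter σ, w.filter (!σ ·), B.init⟩ : Cfg A B) ⟨r, [], [], p⟩) :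
    dupApply A B ⟨r, w.filter σ, w.filter (!σ ·), B.init⟩ (drainMoves σ r p w) =
      some ⟨r, [], [], p⟩ := by
  rw [drainMoves, dif_pos h]
  exact h.choose_spec

variable {sp : ℕ → S × A.Q} {dm : ℕ → List (Bool × B.Q)}

lemma Consistent.eq_waitDrain (hcons : Consistent A B (waitDrainStrat σ r p) sp dm) (n : ℕ) :
    dm n = if ∃ i < n, (sp i).2 = r then [(σ (sp n).1, p)]
      else if (sp n).2 = r then drainMoves σ r p (spWord sp (n + 1)) else [] := by
  rw [hcons n, waitDrainStrat, spWord_succ, spWord, List.map_ofFn]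
  simp [List.mem_ofFn, Function.comp_def, Fin.exists_iff]

lemma Consistent.eq_nil (hcons : Consistent A B (waitDrainStrat σ r p) sp dm) {n : ℕ}
    (hn : ∀ i ≤ n, (sp i).2 ≠ r) : dm n = [] := by
  rw [hcons.eq_waitDrain, if_neg (fun ⟨i, hi, h⟩ => hn i hi.le h), if_neg (hn n le_rfl)]

lemma Consistent.eq_drainMoves (hcons : Consistent A B (waitDrainStrat σ r p) sp dm) {n : ℕ}
    (hn : (sp n).2 = r) (hmin : ∀ i < n, (sp i).2 ≠ r) :
    dm n = drainMoves σ r p (spWord sp (n + 1)) := by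
  rw [hcons.eq_waitDrain, if_neg (fun ⟨i, hi, h⟩ => hmin i hi h), if_pos hn]

lemma Consistent.eq_sink (hcons : Consistent A B (waitDrainStrat σ r p) sp dm) {T n : ℕ}
    (hT : (sp T).2 = r) (hn : T < n) : dm n = [(σ (sp n).1, p)] := by
  rw [hcons.eq_waitDrain, if_pos ⟨T, hn, hT⟩]

lemma waitDrainStrat_wins_of_forall_ne (hr : ∀ q, A.acc q → q = r)
    (hcons : Consistent A B (waitDrainStrat σ r p) sp dm) (hleg : SpLegal A B σ sp dm)
    (hne : ∀ n, (sp n).2 ≠ r) :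
    (∀ n, (playCfg A B σ sp dm n).isSome) ∧ Win2 A B σ ⊤ ⊤ sp dm := by
  have hplay n := playCfg_of_forall_dm_eq_nil hleg n fun i _ => hcons.eq_nil fun k _ => hne k
  refine ⟨fun n => by rw [hplay n]; rfl, fun _ _ _ => ⟨le_top, le_top⟩,
    Or.inl ⟨0, fun n _ hacc => hne n (hr _ hacc)⟩⟩

lemma waitDrainStrat_wins_of_first_reach (hp : B.acc p) (hsink : ∀ a, B.trans p a p)
    (hcons : Consistent A B (waitDrainStrat σ r p) sp dm) (hleg : SpLegal A B σ sp dm)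
    {T : ℕ} (hT : (sp T).2 = r) (hmin : ∀ i < T, (sp i).2 ≠ r)
    (hdrain : DupReach (⟨r, (spWord sp (T + 1)).filter σ, (spWord sp (T + 1)).filter (!σ ·),
      B.init⟩ : Cfg A B) ⟨r, [], [], p⟩) :
    (∀ n, (playCfg A B σ sp dm n).isSome) ∧ Win2 A B σ ⊤ ⊤ sp dm := by
  have hwait : ∀ n ≤ T, playCfg A B σ sp dm n = some ⟨spoilerState A sp n,
      (spWord sp n).filter σ, (spWord sp n).filter (!σ ·), B.init⟩ := fun n hn =>
    playCfg_of_forall_dm_eq_nil hleg n fun i hi => hcons.eq_nil fun k hk => hmin k (by omega)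
  have hdrained : playCfg A B σ sp dm (T + 1) = some ⟨r, [], [], p⟩ := by
    rw [playCfg_succ (hwait T le_rfl) (hleg T _ (hwait T le_rfl)), midCfg_filter, hT,
      ← spWord_succ, hcons.eq_drainMoves hT hmin]
    exact dupApply_drainMoves hdrain
  have hsunk : ∀ n ≥ T + 1, ∃ q, playCfg A B σ sp dm n = some ⟨q, [], [], p⟩ :=
    playCfg_of_sink hsink hleg ⟨r, hdrained⟩ fun n hn => hcons.eq_sink hT hn
  refine ⟨fun n => ?_, fun _ _ _ => ⟨le_top, le_top⟩, Or.inr ⟨?_, fun n => ?_⟩⟩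
  · rcases le_or_gt n T with hn | hn
    · rw [hwait n hn]; rfl
    · obtain ⟨q, hq⟩ := hsunk n hn
      rw [hq]; rfl
  · exact pushed_le_consumed_of_frequently_empty fun n =>
      ⟨max n (T + 1), le_max_left _ _, hsunk _ (le_max_right _ _)⟩
  · refine ⟨max n (T + 1), le_max_left _ _, (σ (sp (max n (T + 1))).1, p), ?_, hp⟩
    rw [hcons.eq_sink hT (by omega)]
    exact List.mem_singleton_self _

theorem sim2_top_of_drain (hr : ∀ q, A.acc q → q = r) (hp : B.acc p)
    (hsink : ∀ a, B.trans p a p)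
    (hdrain : ∀ (sp : ℕ → S × A.Q) (T : ℕ),
      (∀ i ≤ T, A.trans (spoilerState A sp i) (sp i).1 (sp i).2) →
      (∀ i < T, (sp i).2 ≠ r) → (sp T).2 = r →
      DupReach (⟨r, (spWord sp (T + 1)).filter σ, (spWord sp (T + 1)).filter (!σ ·),
        B.init⟩ : Cfg A B) ⟨r, [], [], p⟩) :
    Sim2 A B σ ⊤ ⊤ := by
  refine ⟨waitDrainStrat σ r p, fun sp dm hcons hleg => ?_⟩
  by_cases hreach : ∃ n, (sp n).2 = r
  · have hT := Nat.find_spec hreach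
    have hmin : ∀ i < Nat.find hreach, (sp i).2 ≠ r := fun i hi => Nat.find_min hreach hi
    refine waitDrainStrat_wins_of_first_reach hp hsink hcons hleg hT hmin (hdrain sp _ ?_ hmin hT)
    intro i hi
    exact hleg i _ (playCfg_of_forall_dm_eq_nil hleg i fun k hk =>
      hcons.eq_nil fun l hl => hmin l (by omega))
  · exact waitDrainStrat_wins_of_forall_ne hr hcons hleg (not_exists.1 hreach)

end Strategy

section PCP
variable {nn : ℕ} {u v : Fin nn → List Bool}

lemma σPL_pl (b : Bool) : σPL (pl b) = true := by cases b <;> rfl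

lemma σPL_br (b : Bool) : σPL (br b) = false := by cases b <;> rfl

variable (u v) in
def blocks (idx : List (Fin nn)) : List PL := (idx.map fun i => wrd (u i) (v i)).flatten

lemma filter_blocks (idx : List (Fin nn)) :
    (blocks u v idx).filter σPL = (idx.map u).flatten.map pl := by
  simp [blocks, wrd, List.filter_flatten, List.filter_map, Function.comp_def, σPL_pl, σPL_br,
    List.map_flatten]

lemma filter_not_blocks (idx : List (Fin nn)) :
    (blocks u v idx).filter (!σPL ·) = (idx.map v).flatten.map br := by
  simp [blocks, wrd, List.filter_flatten, List.filter_map, Function.comp_def, σPL_pl, σPL_br,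
    List.map_flatten]

variable (u v) in
/-- What `𝒜_L` has read when it sits in state `q` without having visited `r` yet. -/
def ALInv (w : List PL) : (AL nn u v).Q → Prop
  | .inl 0 => w = []
  | .inl 1 => ∃ idx ≠ [], w = blocks u v idx
  | .inl 2 => ∃ idx ≠ [], w = blocks u v idx ++ [.hash]
  | .inl _ => False
  | .inr (i, k) => ∃ idx, w = blocks u v idx ++ (wrd (u i) (v i)).take k

lemma ALInv.step {w : List PL} {q q' : (AL nn u v).Q} {a : PL} (hq : ALInv u v w q)
    (ht : (AL nn u v).trans q a q') (hq' : q' ≠ .inl 3) : ALInv u v (w ++ [a]) q' := by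
  rcases ht with ⟨i, rfl | rfl, hget, rfl⟩ | ⟨i, k, rfl, hget, -, rfl⟩ |
    ⟨i, k, rfl, hget, hlen, rfl⟩ | ⟨rfl, rfl, rfl⟩ | ⟨-, -, rfl⟩ | ⟨rfl, -, -⟩
  · obtain rfl : w = [] := hq
    exact ⟨[], by simp [blocks, List.take_add_one, hget]⟩
  · obtain ⟨idx, -, rfl⟩ := hq
    exact ⟨idx, by simp [List.take_add_one, hget]⟩
  · obtain ⟨idx, rfl⟩ := hq
    exact ⟨idx, by simp [List.take_add_one, hget]⟩
  · obtain ⟨idx, rfl⟩ := hq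
    refine ⟨idx ++ [i], by simp, ?_⟩
    rw [List.append_assoc, ← Option.toList_some, ← hget, ← List.take_add_one, hlen,
      List.take_length]
    simp [blocks]
  · obtain ⟨idx, hidx, rfl⟩ := hq
    exact ⟨idx, hidx, rfl⟩
  · exact absurd rfl hq'
  · exact hq.elim

lemma ALInv.exists_of_trans_r {w : List PL} {q : (AL nn u v).Q} {a : PL}
    (hq : ALInv u v w q) (ht : (AL nn u v).trans q a (.inl 3)) :
    ∃ idx ≠ [], w ++ [a] = blocks u v idx ++ [.hash, .hashb] := by
  rcases ht with ⟨_, _, _, h⟩ | ⟨_, _, _, _, _, h⟩ | ⟨_, _, _, _, _, h⟩ | ⟨_, _, h⟩ |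
    ⟨rfl, rfl, -⟩ | ⟨rfl, -, -⟩
  · cases h
  · cases h
  · cases h
  · cases h
  · obtain ⟨idx, hidx, rfl⟩ := hq
    exact ⟨idx, hidx, by simp⟩
  · exact hq.elim

lemma AL_spWord_of_first_reach {sp : ℕ → PL × (AL nn u v).Q} {T : ℕ}
    (hrun : ∀ i ≤ T, (AL nn u v).trans (spoilerState _ sp i) (sp i).1 (sp i).2)
    (hmin : ∀ i < T, (sp i).2 ≠ .inl 3) (hT : (sp T).2 = .inl 3) :
    ∃ idx ≠ [], spWord sp (T + 1) = blocks u v idx ++ [.hash, .hashb] := by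
  have hinv : ∀ n ≤ T, ALInv u v (spWord sp n) (spoilerState _ sp n) := by
    intro n hn
    induction n with
    | zero => rfl
    | succ n ih =>
      rw [spWord_succ]
      exact (ih (by omega)).step (hrun n (by omega)) (hmin n hn)
  rw [spWord_succ]
  exact (hinv T le_rfl).exists_of_trans_r (hT ▸ hrun T le_rfl)

end PCP

section BL
variable {A : BA PL} {q : A.Q}

lemma BL_trans_sink (a : PL) : BL.trans (5 : Fin 7) a (5 : Fin 7) := by simp [BL]

lemma BL_reach_pair (a : Bool) (l₁ l₂ : List PL) :
    DupReach (⟨q, pl a :: l₁, br a :: l₂, (0 : Fin 7)⟩ : Cfg A BL) ⟨q, l₁, l₂, (0 : Fin 7)⟩ := by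
  cases a
  · exact (DupReach.pop_left (q' := (2 : Fin 7)) (by simp [BL, pl])).trans
      (DupReach.pop_right (by simp [BL, br]))
  · exact (DupReach.pop_left (q' := (4 : Fin 7)) (by simp [BL, pl])).trans
      (DupReach.pop_right (by simp [BL, br]))

lemma BL_reach_sink_of_mismatch {a b : PL} (s : Fin 7) (ha : BL.trans (0 : Fin 7) a s)
    (hb : BL.trans s b (5 : Fin 7)) (l₁ l₂ : List PL) :
    DupReach (⟨q, a :: l₁, b :: l₂, (0 : Fin 7)⟩ : Cfg A BL) ⟨q, [], [], (5 : Fin 7)⟩ :=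
  ((DupReach.pop_left ha).trans (DupReach.pop_right hb)).trans
    (DupReach.flush BL_trans_sink q l₁ l₂)

lemma BL_reach_sink_of_ne : ∀ {U V : List Bool}, U ≠ V →
    DupReach (⟨q, U.map pl ++ [.hash], V.map br ++ [.hashb], (0 : Fin 7)⟩ : Cfg A BL)
      ⟨q, [], [], (5 : Fin 7)⟩
  | [], [], h => absurd rfl h
  | [], c :: V, _ =>
    BL_reach_sink_of_mismatch 3 (by simp [BL]) (by cases c <;> simp [BL, br]) _ _
  | false :: U, [], _ => BL_reach_sink_of_mismatch 1 (by simp [BL, pl]) (by simp [BL]) _ _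
  | true :: U, [], _ => BL_reach_sink_of_mismatch 6 (by simp [BL, pl]) (by simp [BL]) _ _
  | false :: U, true :: V, _ =>
    BL_reach_sink_of_mismatch 1 (by simp [BL, pl]) (by simp [BL, br]) _ _
  | true :: U, false :: V, _ =>
    BL_reach_sink_of_mismatch 6 (by simp [BL, pl]) (by simp [BL, br]) _ _
  | false :: U, false :: V, h =>
    (BL_reach_pair false _ _).trans (BL_reach_sink_of_ne (by simpa using h))
  | true :: U, true :: V, h =>
    (BL_reach_pair true _ _).trans (BL_reach_sink_of_ne (by simpa using h))

end BL

theorem pcp_no_solution_implies_duplicator_wins_general (nn : ℕ) (u v : Fin nn → List Bool)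
    (hnosol : ¬ ∃ idx : List (Fin nn), idx ≠ [] ∧
      (idx.map u).flatten = (idx.map v).flatten) :
    Sim2 (AL nn u v) BL σPL ⊤ ⊤ := by
  refine sim2_top_of_drain (r := .inl 3) (p := (5 : Fin 7)) (fun _ h => h) rfl BL_trans_sink ?_
  intro sp T hrun hmin hT
  obtain ⟨idx, hidx, hw⟩ := AL_spWord_of_first_reach hrun hmin hT
  rw [hw, List.filter_append, List.filter_append, filter_blocks, filter_not_blocks]
  exact BL_reach_sink_of_ne fun h => hnosol ⟨idx, hidx, h⟩

/-- If the PCP instance `L = {(u i, v i)}` (with nonempty words)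
has no solution, then Duplicator wins the two-buffer simulation game with two
unbounded buffers on `𝒜_L` and `ℬ_L`: `𝒜_L ⊑(ω,ω) ℬ_L`. -/
theorem pcp_no_solution_implies_duplicator_wins (nn : ℕ) (u v : Fin nn → List Bool)
    (hu : ∀ i, u i ≠ []) (hv : ∀ i, v i ≠ [])
    (hnosol : ¬ ∃ idx : List (Fin nn), idx ≠ [] ∧
      (idx.map u).flatten = (idx.map v).flatten) :
    Sim2 (AL nn u v) BL σPL ⊤ ⊤ :=
  pcp_no_solution_implies_duplicator_wins_general nn u v hnosol
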